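/- arXiv:2301.07287 — 2 statements merged into one kernel-verified Lean document; each statement's English description precedes it below -/
import Mathlib

section
/- Let S be a symmetric unitary n×n complex matrix with distinguished index 1 such that S_{1,φ} ≠ 0 for all φ, and let T be a diagonal unitary matrix satisfying (S T)³ = S². Define N_{λ,μ}^ν = ∑_φ S_{λ,φ} S_{μ,φ} conj(S_{ν,φ}) / S_{1,φ} and θ(λ) = T_{λ,λ} · conj(T_{1,1}). Then for all λ, μ: S_{λ,μ} = θ(λ) θ(μ) ∑_ν conj(θ(ν)) N_{λ,μ}^ν S_{1,ν}. -/
open Matrix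

theorem verlinde_twist_identity (n : ℕ) (S T : Matrix (Fin (n + 1)) (Fin (n + 1)) ℂ)
    (hsymm : S.IsSymm) (hSunit : Sᴴ * S = 1)
    (hTdiag : T.IsDiag) (hTunit : Tᴴ * T = 1)
    (hS0 : ∀ φ, S 0 φ ≠ 0)
    (hmod : (S * T) ^ 3 = S ^ 2) :
    ∀ lam mu, S lam mu =
      (T lam lam * (starRingEnd ℂ) (T 0 0)) * (T mu mu * (starRingEnd ℂ) (T 0 0)) *
        ∑ ν, (starRingEnd ℂ) (T ν ν * (starRingEnd ℂ) (T 0 0)) *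
          (∑ φ, S lam φ * S mu φ * (starRingEnd ℂ) (S ν φ) / S 0 φ) * S 0 ν := by
  intro lam mu
  have hsym' : ∀ i j, S i j = S j i := fun i j => congrFun (congrFun hsymm j) i
  have hSS' : S * Sᴴ = 1 := mul_eq_one_comm.mp hSunit
  have hTT' : T * Tᴴ = 1 := mul_eq_one_comm.mp hTunit
  have hdl : ∀ (M : Matrix (Fin (n+1)) (Fin (n+1)) ℂ) i j, (T * M) i j = T i i * M i j := by
    intro M i j
    rw [Matrix.mul_apply]
    refine Finset.sum_eq_single i (fun k _ hk => ?_) (fun h => absurd (Finset.mem_univ i) h)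
    rw [hTdiag (Ne.symm hk), zero_mul]
  have hdr : ∀ (M : Matrix (Fin (n+1)) (Fin (n+1)) ℂ) i j, (M * T) i j = M i j * T j j := by
    intro M i j
    rw [Matrix.mul_apply]
    refine Finset.sum_eq_single j (fun k _ hk => ?_) (fun h => absurd (Finset.mem_univ j) h)
    rw [hTdiag hk, mul_zero]
  have hdrH : ∀ (M : Matrix (Fin (n+1)) (Fin (n+1)) ℂ) i j,
      (M * Tᴴ) i j = M i j * star (T j j) := by
    intro M i j
    rw [Matrix.mul_apply]
    refine Finset.sum_eq_single j (fun k _ hk => ?_) (fun h => absurd (Finset.mem_univ j) h)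
    rw [Matrix.conjTranspose_apply, hTdiag (Ne.symm hk), star_zero, mul_zero]
  have ht0 : starRingEnd ℂ (T 0 0) * T 0 0 = 1 := by
    have h := congrFun (congrFun hTunit 0) 0
    rw [Matrix.mul_apply, Matrix.one_apply_eq] at h
    have hs : (∑ k : Fin (n+1), Tᴴ 0 k * T k 0) = Tᴴ 0 0 * T 0 0 :=
      Finset.sum_eq_single (0 : Fin (n+1)) (fun k _ hk => by rw [hTdiag hk, mul_zero])
        (fun h => absurd (Finset.mem_univ _) h)
    rw [hs, Matrix.conjTranspose_apply] at h
    exact h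
  -- key relations
  have h3 := hmod
  rw [pow_succ, pow_two, pow_two] at h3
  have key : T * S * T * S * T = S := by
    calc T * S * T * S * T = 1 * (T * S * T * S * T) := by rw [one_mul]
      _ = (Sᴴ * S) * (T * S * T * S * T) := by rw [hSunit]
      _ = Sᴴ * (S * T * (S * T) * (S * T)) := by simp only [Matrix.mul_assoc]
      _ = Sᴴ * (S * S) := by rw [h3]
      _ = (Sᴴ * S) * S := by rw [Matrix.mul_assoc]
      _ = S := by rw [hSunit, one_mul]
  have e1 : S * Tᴴ = T * S * T * S := by
    calc S * Tᴴ = (T * S * T * S * T) * Tᴴ := by rw [key]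
      _ = (T * S * T * S) * (T * Tᴴ) := by rw [Matrix.mul_assoc]
      _ = T * S * T * S := by rw [hTT', mul_one]
  have M2 : S * Tᴴ * Sᴴ = T * S * T := by
    rw [e1, Matrix.mul_assoc, hSS', mul_one]
  -- entrywise consequences
  have hA : S lam mu = T lam lam * T mu mu * ∑ ν, T ν ν * S lam ν * S mu ν := by
    conv_lhs => rw [← key]
    have e : T * S * T * S * T = T * ((S * T) * S) * T := by simp only [Matrix.mul_assoc]
    rw [e, hdr, hdl, Matrix.mul_apply]
    rw [Finset.mul_sum, Finset.sum_mul, Finset.mul_sum]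
    refine Finset.sum_congr rfl (fun ν _ => ?_)
    rw [hdr, hsym' ν mu]
    ring
  have hB : ∀ φ, (∑ ν, starRingEnd ℂ (T ν ν) * starRingEnd ℂ (S ν φ) * S 0 ν)
      = T 0 0 * S 0 φ * T φ φ := by
    intro φ
    have h := congrFun (congrFun M2 0) φ
    rw [Matrix.mul_apply, hdr, hdl] at h
    rw [← h]
    refine Finset.sum_congr rfl (fun ν _ => ?_)
    rw [hdrH, Matrix.conjTranspose_apply, hsym' φ ν, starRingEnd_apply, starRingEnd_apply]
    ring
  -- main computation
  have step1 : ∀ ν, starRingEnd ℂ (T ν ν * starRingEnd ℂ (T 0 0)) *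
      (∑ φ, S lam φ * S mu φ * starRingEnd ℂ (S ν φ) / S 0 φ) * S 0 ν
      = ∑ φ, (T 0 0 * (S lam φ * S mu φ / S 0 φ)) *
          (starRingEnd ℂ (T ν ν) * starRingEnd ℂ (S ν φ) * S 0 ν) := by
    intro ν
    rw [_root_.map_mul, Complex.conj_conj, Finset.mul_sum, Finset.sum_mul]
    refine Finset.sum_congr rfl (fun φ _ => ?_)
    ring
  calc S lam mu = T lam lam * T mu mu * ∑ ν, T ν ν * S lam ν * S mu ν := hA
    _ = (T lam lam * starRingEnd ℂ (T 0 0)) * (T mu mu * starRingEnd ℂ (T 0 0)) *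
        ∑ φ, (T 0 0 * (S lam φ * S mu φ / S 0 φ)) * (T 0 0 * S 0 φ * T φ φ) := by
        rw [Finset.mul_sum, Finset.mul_sum]
        refine Finset.sum_congr rfl (fun φ _ => ?_)
        have h1 : S lam φ * S mu φ / S 0 φ * S 0 φ = S lam φ * S mu φ :=
          div_mul_cancel₀ _ (hS0 φ)
        linear_combination (-(T lam lam * T mu mu * T φ φ) *
            (starRingEnd ℂ (T 0 0) * T 0 0) ^ 2) * h1 +
          (-(T lam lam * T mu mu * T φ φ * S lam φ * S mu φ) *
            (starRingEnd ℂ (T 0 0) * T 0 0 + 1)) * ht0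
    _ = (T lam lam * starRingEnd ℂ (T 0 0)) * (T mu mu * starRingEnd ℂ (T 0 0)) *
        ∑ φ, (T 0 0 * (S lam φ * S mu φ / S 0 φ)) *
          (∑ ν, starRingEnd ℂ (T ν ν) * starRingEnd ℂ (S ν φ) * S 0 ν) := by
        congr 1
        exact Finset.sum_congr rfl (fun φ _ => by rw [hB φ])
    _ = (T lam lam * starRingEnd ℂ (T 0 0)) * (T mu mu * starRingEnd ℂ (T 0 0)) *
        ∑ ν, starRingEnd ℂ (T ν ν * starRingEnd ℂ (T 0 0)) *
          (∑ φ, S lam φ * S mu φ * starRingEnd ℂ (S ν φ) / S 0 φ) * S 0 ν := by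
        congr 1
        rw [show (∑ ν, starRingEnd ℂ (T ν ν * starRingEnd ℂ (T 0 0)) *
          (∑ φ, S lam φ * S mu φ * starRingEnd ℂ (S ν φ) / S 0 φ) * S 0 ν)
          = ∑ ν, ∑ φ, (T 0 0 * (S lam φ * S mu φ / S 0 φ)) *
          (starRingEnd ℂ (T ν ν) * starRingEnd ℂ (S ν φ) * S 0 ν) from
          Finset.sum_congr rfl (fun ν _ => step1 ν)]
        rw [Finset.sum_comm]
        exact Finset.sum_congr rfl (fun φ _ => Finset.mul_sum _ _ _)
end

section
/- Let p_n denote the n-th prime and P_m = ∏_{i=1}^{m} p_i the m-th primorial. Let A > 0 be a real number and suppose P_l ≥ A·(p_l² − p_l) for some l ≥ 1. Then P_m ≥ A·(p_m² − p_m) for all m ≥ l. -/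
/-!
Bertrand's postulate gives `p_{m+1} < 2 p_m` (strictly, as `2 p_m` is not prime), and since
`(p - 1)(p - 2) ≥ 0` this yields `p_{m+1} - 1 ≤ p_m² - p_m`. Hence, for `A ≥ 0`,
`P_{m+1} = p_{m+1} P_m ≥ A p_{m+1} (p_m² - p_m) ≥ A p_{m+1} (p_{m+1} - 1)`, and the bound
propagates by induction.
-/

/-- The primorial `P m = p₁ ⋯ p_m`, where `p_i = Nat.nth Nat.Prime (i - 1)`. -/
noncomputable def primorial' (m : ℕ) : ℕ := ∏ i ∈ Finset.range m, Nat.nth Nat.Prime i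

namespace Nat

theorem nth_prime_succ_lt_two_mul (n : ℕ) : nth Prime (n + 1) < 2 * nth Prime n := by
  have hp := (prime_nth_prime n).two_le
  obtain ⟨q, hq, hpq, hq2⟩ := exists_prime_lt_and_le_two_mul (nth Prime n) (by omega)
  have hle : nth Prime (n + 1) ≤ 2 * nth Prime n :=
    (not_lt.1 fun h => (le_nth_of_lt_nth_succ h hq).not_gt hpq).trans hq2
  refine hle.lt_of_ne fun h => ?_
  exact not_prime_mul (a := 2) (b := nth Prime n) (by norm_num) (by omega)
    (h ▸ prime_nth_prime (n + 1))

theorem nth_prime_lt_two_mul_nth_prime_pred (m : ℕ) : nth Prime m < 2 * nth Prime (m - 1) := by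
  cases m with
  | zero => exact lt_two_mul_self (prime_nth_prime 0).pos
  | succ n => exact nth_prime_succ_lt_two_mul n

theorem cast_nth_prime_sub_one_le_sq_sub_pred (m : ℕ) :
    (nth Prime m : ℝ) - 1 ≤ (nth Prime (m - 1) : ℝ) ^ 2 - nth Prime (m - 1) := by
  have hba : (nth Prime m : ℝ) + 1 ≤ 2 * nth Prime (m - 1) := by
    exact_mod_cast nth_prime_lt_two_mul_nth_prime_pred m
  have ha : (2 : ℝ) ≤ nth Prime (m - 1) := by exact_mod_cast (prime_nth_prime _).two_le
  nlinarith

end Nat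

theorem primorial'_succ (m : ℕ) : primorial' (m + 1) = primorial' m * Nat.nth Nat.Prime m :=
  Finset.prod_range_succ _ _

theorem mul_sq_sub_self_le_mul {R : Type*} [CommRing R] [LinearOrder R] [IsStrictOrderedRing R]
    {A a b x : R} (hA : 0 ≤ A) (hb : 0 ≤ b) (hba : b - 1 ≤ a ^ 2 - a)
    (hx : A * (a ^ 2 - a) ≤ x) : A * (b ^ 2 - b) ≤ b * x :=
  calc A * (b ^ 2 - b) = b * (A * (b - 1)) := by ring
    _ ≤ b * (A * (a ^ 2 - a)) := by gcongr
    _ ≤ b * x := by gcongr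

theorem primorial_stays_above_threshold_general (A : ℝ) (hA : 0 < A) (l : ℕ)
    (h : (primorial' l : ℝ) ≥
      A * ((Nat.nth Nat.Prime (l - 1) : ℝ) ^ 2 - (Nat.nth Nat.Prime (l - 1) : ℝ))) :
    ∀ m, l ≤ m → (primorial' m : ℝ) ≥
      A * ((Nat.nth Nat.Prime (m - 1) : ℝ) ^ 2 - (Nat.nth Nat.Prime (m - 1) : ℝ)) := by
  intro m hm
  induction m, hm using Nat.le_induction with
  | base => exact h
  | succ m _ ih =>
    rw [primorial'_succ, Nat.cast_mul, mul_comm, Nat.add_sub_cancel]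
    exact mul_sq_sub_self_le_mul hA.le (Nat.cast_nonneg _)
      (Nat.cast_nth_prime_sub_one_le_sq_sub_pred m) ih

theorem primorial_stays_above_threshold (A : ℝ) (hA : 0 < A) (l : ℕ) (hl : 1 ≤ l)
    (h : (primorial' l : ℝ) ≥
      A * ((Nat.nth Nat.Prime (l - 1) : ℝ) ^ 2 - (Nat.nth Nat.Prime (l - 1) : ℝ))) :
    ∀ m, l ≤ m → (primorial' m : ℝ) ≥
      A * ((Nat.nth Nat.Prime (m - 1) : ℝ) ^ 2 - (Nat.nth Nat.Prime (m - 1) : ℝ)) :=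
  primorial_stays_above_threshold_general A hA l h
end
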